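/- Let x_s^(i) ∈ ℝⁿ for i = 1,…,N and s = 1,…,m, let F : ℝⁿ → ℝ be differentiable, let a ∈ ℝ^N have positive entries summing to 1 and p ∈ [0,1]^N. For each i and s, let g_s^(i) = θ_s^i · G_s^i, where the θ_s^i are Bernoulli(p_i), E[G_s^i | x_s^(i)] = ∇F(x_s^(i)), E[‖G_s^i − ∇F(x_s^(i))‖² | x_s^(i)] ≤ β‖∇F(x_s^(i))‖² + σ², each θ_s^i is independent of G_s^i, and the collections across distinct (i,s) are mutually independent given the models. Then E Σ_{i=1}^N a_i ‖ Σ_{s=1}^m ( g_s^(i) − ∇F(x_s^(i)) ) ‖² ≤ m Σ_{i=1}^N a_i (p_i(β−1)+1) Σ_{s=1}^m E‖∇F(x_s^(i))‖² + m² σ² Σ_{i=1}^N a_i p_i. -/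

import Mathlib

open MeasureTheory ProbabilityTheory Finset

/-!
Two facts give the bound. By Cauchy–Schwarz, `‖∑ₛ vₛ‖² ≤ m ∑ₛ ‖vₛ‖²`, so the accumulated
noise of worker `i` is controlled by the sum of its one-step noises. For one step, since
`θ ∈ {0, 1}`, `‖θ G - c‖² = θ ‖G - c‖² + (1 - θ) ‖c‖²`, and independence of `θ` and `G` turns
the expectation into `p E‖G - c‖² + (1 - p) ‖c‖² ≤ (p (β - 1) + 1) ‖c‖² + p σ²`.
-/

section Deterministic

variable {E : Type*} [SeminormedAddCommGroup E]

lemma norm_sum_sq_le_card_mul_sum_norm_sq {ι : Type*} (t : Finset ι) (v : ι → E) :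
    ‖∑ s ∈ t, v s‖ ^ 2 ≤ #t * ∑ s ∈ t, ‖v s‖ ^ 2 :=
  (pow_le_pow_left₀ (norm_nonneg _) (norm_sum_le _ _) 2).trans (sq_sum_le_card_mul_sum_sq ..)

lemma norm_smul_sub_sq_of_eq_zero_or_eq_one [NormedSpace ℝ E] {t : ℝ} (ht : t = 0 ∨ t = 1)
    (v c : E) : ‖t • v - c‖ ^ 2 = t * ‖v - c‖ ^ 2 + (1 - t) * ‖c‖ ^ 2 := by
  rcases ht with rfl | rfl <;> simp

end Deterministic

section Probabilistic

variable {Ω E : Type*} [MeasurableSpace Ω] {μ : Measure Ω} [NormedAddCommGroup E]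

lemma integrable_norm_sum_sq {ι : Type*} (t : Finset ι) {f : ι → Ω → E}
    (hf : ∀ s ∈ t, AEStronglyMeasurable (f s) μ)
    (hsq : ∀ s ∈ t, Integrable (fun ω => ‖f s ω‖ ^ 2) μ) :
    Integrable (fun ω => ‖∑ s ∈ t, f s ω‖ ^ 2) μ := by
  refine ((integrable_finsetSum t hsq).const_mul #t).mono' ?_ (ae_of_all _ fun ω => ?_)
  · exact (aestronglyMeasurable_fun_sum t hf).norm.pow 2
  · simpa only [norm_pow, norm_norm] using norm_sum_sq_le_card_mul_sum_norm_sq t (f · ω)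

lemma integral_norm_sum_sq_le {ι : Type*} (t : Finset ι) {f : ι → Ω → E}
    (hf : ∀ s ∈ t, AEStronglyMeasurable (f s) μ)
    (hsq : ∀ s ∈ t, Integrable (fun ω => ‖f s ω‖ ^ 2) μ) :
    ∫ ω, ‖∑ s ∈ t, f s ω‖ ^ 2 ∂μ ≤ #t * ∑ s ∈ t, ∫ ω, ‖f s ω‖ ^ 2 ∂μ := by
  rw [← integral_finsetSum t hsq, ← integral_const_mul]
  exact integral_mono (integrable_norm_sum_sq t hf hsq)
    ((integrable_finsetSum t hsq).const_mul _)
    fun ω => norm_sum_sq_le_card_mul_sum_norm_sq t (f · ω)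

lemma integrable_of_eq_zero_or_eq_one [IsFiniteMeasure μ] {θ : Ω → ℝ} (hθ : Measurable θ)
    (hθ01 : ∀ ω, θ ω = 0 ∨ θ ω = 1) : Integrable θ μ :=
  (integrable_const (1 : ℝ)).mono' hθ.aestronglyMeasurable <| ae_of_all _ fun ω => by
    rcases hθ01 ω with h | h <;> simp [h]

variable [MeasurableSpace E] [OpensMeasurableSpace E] {θ : Ω → ℝ} {G : Ω → E}

lemma indepFun_norm_sub_sq (hind : IndepFun θ G μ) (c : E) :
    IndepFun θ (fun ω => ‖G ω - c‖ ^ 2) μ :=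
  hind.comp (φ := id) (ψ := fun v => ‖v - c‖ ^ 2) measurable_id
    ((continuous_id.sub continuous_const).norm.pow 2).measurable

variable [NormedSpace ℝ E] [IsProbabilityMeasure μ]

lemma integrable_norm_smul_sub_sq (hθ : Measurable θ) (hθ01 : ∀ ω, θ ω = 0 ∨ θ ω = 1)
    (hind : IndepFun θ G μ) (c : E) (hsq : Integrable (fun ω => ‖G ω - c‖ ^ 2) μ) :
    Integrable (fun ω => ‖θ ω • G ω - c‖ ^ 2) μ := by
  have hθint := integrable_of_eq_zero_or_eq_one (μ := μ) hθ hθ01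
  simp_rw [norm_smul_sub_sq_of_eq_zero_or_eq_one (hθ01 _)]
  exact ((indepFun_norm_sub_sq hind c).integrable_mul hθint hsq).add
    (((integrable_const 1).sub hθint).mul_const _)

lemma integral_norm_smul_sub_sq {p : ℝ} (hθ : Measurable θ)
    (hθ01 : ∀ ω, θ ω = 0 ∨ θ ω = 1) (hθmean : ∫ ω, θ ω ∂μ = p) (hind : IndepFun θ G μ) (c : E)
    (hsq : Integrable (fun ω => ‖G ω - c‖ ^ 2) μ) :
    ∫ ω, ‖θ ω • G ω - c‖ ^ 2 ∂μ = p * ∫ ω, ‖G ω - c‖ ^ 2 ∂μ + (1 - p) * ‖c‖ ^ 2 := by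
  have hθint := integrable_of_eq_zero_or_eq_one (μ := μ) hθ hθ01
  have hmul : Integrable (fun ω => θ ω * ‖G ω - c‖ ^ 2) μ :=
    (indepFun_norm_sub_sq hind c).integrable_mul hθint hsq
  have hrest : Integrable (fun ω => (1 - θ ω) * ‖c‖ ^ 2) μ :=
    ((integrable_const 1).sub hθint).mul_const _
  simp_rw [norm_smul_sub_sq_of_eq_zero_or_eq_one (hθ01 _)]
  rw [integral_add hmul hrest, integral_mul_const, integral_sub (integrable_const 1) hθint,
    (indepFun_norm_sub_sq hind c).integral_fun_mul_eq_mul_integral hθint.aestronglyMeasurable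
      hsq.aestronglyMeasurable, hθmean]
  simp

lemma integral_norm_smul_sub_sq_le {p β σ : ℝ} (hp : 0 ≤ p) (hθ : Measurable θ)
    (hθ01 : ∀ ω, θ ω = 0 ∨ θ ω = 1) (hθmean : ∫ ω, θ ω ∂μ = p) (hind : IndepFun θ G μ) (c : E)
    (hsq : Integrable (fun ω => ‖G ω - c‖ ^ 2) μ)
    (hvar : ∫ ω, ‖G ω - c‖ ^ 2 ∂μ ≤ β * ‖c‖ ^ 2 + σ ^ 2) :
    ∫ ω, ‖θ ω • G ω - c‖ ^ 2 ∂μ ≤ (p * (β - 1) + 1) * ‖c‖ ^ 2 + p * σ ^ 2 := by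
  rw [integral_norm_smul_sub_sq hθ hθ01 hθmean hind c hsq]
  nlinarith [mul_le_mul_of_nonneg_left hvar hp]

lemma integrable_norm_sum_smul_sub_sq {ι : Type*} (t : Finset ι) {θ : ι → Ω → ℝ}
    {G : ι → Ω → E} {c : ι → E} (hθ : ∀ s, Measurable (θ s))
    (hG : ∀ s, AEStronglyMeasurable (G s) μ) (hθ01 : ∀ s ω, θ s ω = 0 ∨ θ s ω = 1)
    (hind : ∀ s, IndepFun (θ s) (G s) μ) (hsq : ∀ s, Integrable (fun ω => ‖G s ω - c s‖ ^ 2) μ) :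
    Integrable (fun ω => ‖∑ s ∈ t, (θ s ω • G s ω - c s)‖ ^ 2) μ :=
  integrable_norm_sum_sq t
    (fun s _ => ((hθ s).aestronglyMeasurable.smul (hG s)).sub aestronglyMeasurable_const)
    fun s _ => integrable_norm_smul_sub_sq (hθ s) (hθ01 s) (hind s) (c s) (hsq s)

lemma integral_norm_sum_smul_sub_sq_le {ι : Type*} (t : Finset ι) {θ : ι → Ω → ℝ}
    {G : ι → Ω → E} {c : ι → E} {p β σ : ℝ} (hp : 0 ≤ p) (hθ : ∀ s, Measurable (θ s))
    (hG : ∀ s, AEStronglyMeasurable (G s) μ) (hθ01 : ∀ s ω, θ s ω = 0 ∨ θ s ω = 1)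
    (hθmean : ∀ s, ∫ ω, θ s ω ∂μ = p) (hind : ∀ s, IndepFun (θ s) (G s) μ)
    (hsq : ∀ s, Integrable (fun ω => ‖G s ω - c s‖ ^ 2) μ)
    (hvar : ∀ s, ∫ ω, ‖G s ω - c s‖ ^ 2 ∂μ ≤ β * ‖c s‖ ^ 2 + σ ^ 2) :
    ∫ ω, ‖∑ s ∈ t, (θ s ω • G s ω - c s)‖ ^ 2 ∂μ ≤
      #t * ∑ s ∈ t, ((p * (β - 1) + 1) * ‖c s‖ ^ 2 + p * σ ^ 2) := by
  refine (integral_norm_sum_sq_le t (fun s _ => ?_) fun s _ => ?_).trans ?_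
  · exact ((hθ s).aestronglyMeasurable.smul (hG s)).sub aestronglyMeasurable_const
  · exact integrable_norm_smul_sub_sq (hθ s) (hθ01 s) (hind s) (c s) (hsq s)
  · gcongr with s
    exact integral_norm_smul_sub_sq_le hp (hθ s) (hθ01 s) (hθmean s) (hind s) (c s) (hsq s)
      (hvar s)

end Probabilistic

theorem stmt_17_general {n N m : ℕ} {Ω : Type} [MeasurableSpace Ω]
    (μ : Measure Ω) [IsProbabilityMeasure μ]
    (F : EuclideanSpace ℝ (Fin n) → ℝ)
    (x : Fin N → Fin m → EuclideanSpace ℝ (Fin n))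
    (a p : Fin N → ℝ) (hapos : ∀ i, 0 < a i)
    (hp : ∀ i, p i ∈ Set.Icc (0 : ℝ) 1)
    (β σ : ℝ)
    (θ : Fin N → Fin m → Ω → ℝ) (G : Fin N → Fin m → Ω → EuclideanSpace ℝ (Fin n))
    (hθmeas : ∀ i s, Measurable (θ i s)) (hGmeas : ∀ i s, Measurable (G i s))
    (hθ01 : ∀ i s ω, θ i s ω = 0 ∨ θ i s ω = 1)
    (hθmean : ∀ i s, ∫ ω, θ i s ω ∂μ = p i)
    (hGsqint : ∀ i s, Integrable (fun ω => ‖G i s ω - gradient F (x i s)‖ ^ 2) μ)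
    (hGvar : ∀ i s, ∫ ω, ‖G i s ω - gradient F (x i s)‖ ^ 2 ∂μ ≤
      β * ‖gradient F (x i s)‖ ^ 2 + σ ^ 2)
    (hpair : ∀ i s, IndepFun (θ i s) (G i s) μ) :
    ∫ ω, ∑ i, a i * ‖∑ s, (θ i s ω • G i s ω - gradient F (x i s))‖ ^ 2 ∂μ ≤
      (m : ℝ) * ∑ i, a i * (p i * (β - 1) + 1) * (∑ s, ‖gradient F (x i s)‖ ^ 2)
        + (m : ℝ) ^ 2 * σ ^ 2 * ∑ i, a i * p i := by
  have hG i s := (hGmeas i s).aestronglyMeasurable (μ := μ)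
  have hworker i : ∫ ω, ‖∑ s, (θ i s ω • G i s ω - gradient F (x i s))‖ ^ 2 ∂μ ≤
      m * (p i * (β - 1) + 1) * (∑ s, ‖gradient F (x i s)‖ ^ 2) + m ^ 2 * σ ^ 2 * p i := by
    refine (integral_norm_sum_smul_sub_sq_le univ (hp i).1 (hθmeas i) (hG i) (hθ01 i)
      (hθmean i) (hpair i) (hGsqint i) (hGvar i)).trans_eq ?_
    rw [sum_add_distrib, sum_const, ← mul_sum, card_univ, Fintype.card_fin, nsmul_eq_mul]
    ring
  have hint i := integrable_norm_sum_smul_sub_sq univ (hθmeas i) (hG i) (hθ01 i) (hpair i)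
    (hGsqint i)
  calc ∫ ω, ∑ i, a i * ‖∑ s, (θ i s ω • G i s ω - gradient F (x i s))‖ ^ 2 ∂μ
      = ∑ i, a i * ∫ ω, ‖∑ s, (θ i s ω • G i s ω - gradient F (x i s))‖ ^ 2 ∂μ := by
        rw [integral_finsetSum _ fun i _ => (hint i).const_mul _]
        simp only [integral_const_mul]
    _ ≤ ∑ i, a i * (m * (p i * (β - 1) + 1) * (∑ s, ‖gradient F (x i s)‖ ^ 2)
          + m ^ 2 * σ ^ 2 * p i) := by
        gcongr with i
        exacts [(hapos i).le, hworker i]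
    _ = _ := by
        rw [mul_sum, mul_sum, ← sum_add_distrib]
        exact sum_congr rfl fun i _ => by ring

/-- **Accumulated stochastic-gradient noise bound (equations (144)–(148) in the proof
of Theorem 1 of the paper).**
For a block of `m` iterations with fixed models `x i s`, Bernoulli(`p i`)-masked
unbiased gradients `g s i = θ i s • G i s` with variance bound
`E‖G i s − ∇F(x i s)‖² ≤ β‖∇F(x i s)‖² + σ²`, mutually independent across `(i, s)`:
`E ∑ i a i ‖∑ s (g s i − ∇F(x i s))‖²
  ≤ m ∑ i a i (p i(β−1)+1) ∑ s ‖∇F(x i s)‖² + m² σ² ∑ i a i p i`. -/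
theorem stmt_17 {n N m : ℕ} {Ω : Type} [MeasurableSpace Ω]
    (μ : Measure Ω) [IsProbabilityMeasure μ]
    (F : EuclideanSpace ℝ (Fin n) → ℝ) (hF : Differentiable ℝ F)
    (x : Fin N → Fin m → EuclideanSpace ℝ (Fin n))
    (a p : Fin N → ℝ) (hapos : ∀ i, 0 < a i) (hasum : ∑ i, a i = 1)
    (hp : ∀ i, p i ∈ Set.Icc (0 : ℝ) 1)
    (β σ : ℝ) (hβ : 0 ≤ β) (hσ : 0 ≤ σ)
    (θ : Fin N → Fin m → Ω → ℝ) (G : Fin N → Fin m → Ω → EuclideanSpace ℝ (Fin n))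
    (hθmeas : ∀ i s, Measurable (θ i s)) (hGmeas : ∀ i s, Measurable (G i s))
    (hθ01 : ∀ i s ω, θ i s ω = 0 ∨ θ i s ω = 1)
    (hθmean : ∀ i s, ∫ ω, θ i s ω ∂μ = p i)
    (hGint : ∀ i s, Integrable (G i s) μ)
    (hGmean : ∀ i s, ∫ ω, G i s ω ∂μ = gradient F (x i s))
    (hGsqint : ∀ i s, Integrable (fun ω => ‖G i s ω - gradient F (x i s)‖ ^ 2) μ)
    (hGvar : ∀ i s, ∫ ω, ‖G i s ω - gradient F (x i s)‖ ^ 2 ∂μ ≤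
      β * ‖gradient F (x i s)‖ ^ 2 + σ ^ 2)
    (hpair : ∀ i s, IndepFun (θ i s) (G i s) μ)
    (hindep : iIndepFun
      (fun (is : Fin N × Fin m) ω => (θ is.1 is.2 ω, G is.1 is.2 ω)) μ) :
    ∫ ω, ∑ i, a i * ‖∑ s, (θ i s ω • G i s ω - gradient F (x i s))‖ ^ 2 ∂μ ≤
      (m : ℝ) * ∑ i, a i * (p i * (β - 1) + 1) * (∑ s, ‖gradient F (x i s)‖ ^ 2)
        + (m : ℝ) ^ 2 * σ ^ 2 * ∑ i, a i * p i :=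
  stmt_17_general μ F x a p hapos hp β σ θ G hθmeas hGmeas hθ01 hθmean hGsqint hGvar hpair
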